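/- In a solvable SRI instance with all preference lists of length at most 4, any stable matching M satisfies c(M) ≤ (5/3) · c(M_egal), where M_egal is an egalitarian stable matching and c is the sum of ranks of matched agents, assuming the instance has no (1,1)-pairs and no (4,4)-pairs. -/

import Mathlib

/-- An instance of the Stable Roommates problem with Incomplete (strict) lists:
a graph together with a rank function, where `rank u v` is one plus the number
of neighbours of `u` that `u` strictly prefers to `v`, and ranks of distinct
neighbours are distinct (strict preferences). -/
structure SRI (V : Type*) [Fintype V] where
  G : SimpleGraph V
  rank : V → V → ℕ
  rank_eq : ∀ u v, G.Adj u v →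
    rank u v = 1 + Set.ncard {w | G.Adj u w ∧ rank u w < rank u v}
  rank_inj : ∀ u v w, G.Adj u v → G.Adj u w → rank u v = rank u w → v = w

variable {V : Type*} [Fintype V]

/-- A matching: a symmetric partial pairing along edges of the graph. -/
structure SRI.Matching (I : SRI V) where
  M : V → Option V
  symm : ∀ u v, M u = some v → M v = some u
  adj : ∀ u v, M u = some v → I.G.Adj u v

/-- Edge `uv` blocks `N`. -/
def SRI.Blocks (I : SRI V) (N : I.Matching) (u v : V) : Prop :=
  I.G.Adj u v ∧ N.M u ≠ some v ∧
  (N.M u = none ∨ ∃ w, N.M u = some w ∧ I.rank u v < I.rank u w) ∧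
  (N.M v = none ∨ ∃ w, N.M v = some w ∧ I.rank v u < I.rank v w)

def SRI.Stable (I : SRI V) (N : I.Matching) : Prop := ∀ u v, ¬ I.Blocks N u v

/-- Cost of a matching: the sum of `rank a (M a)` over matched agents `a`. -/
def SRI.cost (I : SRI V) (N : I.Matching) : ℕ :=
  ∑ v : V, (N.M v).elim 0 (I.rank v)

/-- Every preference list has length at most `d`. -/
def SRI.MaxDeg (I : SRI V) (d : ℕ) : Prop := ∀ v, Set.ncard {w | I.G.Adj v w} ≤ d

/-- An egalitarian stable matching minimises cost among stable matchings. -/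
def SRI.Egalitarian (I : SRI V) (N : I.Matching) : Prop :=
  I.Stable N ∧ ∀ N' : I.Matching, I.Stable N' → I.cost N ≤ I.cost N'

/-!
All stable matchings match the same agents: if `a` is matched in `M₁` but not in `M₂`,
follow alternately `M₁`- and `M₂`-edges from `a`. Stability forces every agent reached to
be matched in the next matching, to someone it prefers to the agent it came from, so the
walk never gets stuck; but it is an orbit of a permutation of the finite set `V × Bool`,
hence returns to `(a, M₁)`, and the state preceding that is `(a, M₂)`, where it is stuck.

Now group the agents into the pairs `{v, w}` of `Ne` (the unmatched ones cost nothing in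
either matching). If `N` does not match `v` to `w`, the edge `vw` does not block `N`, so one
of them, say `v`, gets in `N` a rank `x < a := rank v w`, whence `a ≥ 2`. The other gets
rank at most `4`, so `N` pays at most `a + 3` on the pair and `Ne` at least `a + 1`; and
`3 (a + 3) ≤ 5 (a + 1)` as `a ≥ 2`.
-/

namespace SRI

variable (I : SRI V)

lemma one_le_rank {u v : V} (h : I.G.Adj u v) : 1 ≤ I.rank u v := by
  rw [I.rank_eq u v h]; omega

lemma rank_le_of_maxDeg {d : ℕ} (hd : I.MaxDeg d) {u v : V} (h : I.G.Adj u v) :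
    I.rank u v ≤ d := by
  have hfin : {w | I.G.Adj u w}.Finite := Set.toFinite _
  have hsub : {w | I.G.Adj u w ∧ I.rank u w < I.rank u v} ⊆ {w | I.G.Adj u w} \ {v} :=
    fun w ⟨hw, hlt⟩ => ⟨hw, fun hwv => hlt.ne (congrArg _ hwv)⟩
  have hle := Set.ncard_le_ncard hsub hfin.sdiff
  have hlt := Set.ncard_sdiff_singleton_lt_of_mem (show v ∈ {w | I.G.Adj u w} from h) hfin
  have := hd u
  rw [I.rank_eq u v h]; omega

lemma rank_lt_of_le {u v w : V} (hv : I.G.Adj u v) (hw : I.G.Adj u w) (hne : v ≠ w)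
    (hle : I.rank u v ≤ I.rank u w) : I.rank u v < I.rank u w :=
  hle.lt_of_ne fun h => hne (I.rank_inj u v w hv hw h)

def Prefers (Q : I.Matching) (u v : V) : Prop :=
  Q.M u = none ∨ ∃ p, Q.M u = some p ∧ I.rank u v < I.rank u p

variable {I}

lemma Stable.exists_mate_of_prefers {Q : I.Matching} (hQ : I.Stable Q) {u v : V}
    (hadj : I.G.Adj u v) (hu : I.Prefers Q u v) :
    ∃ q, Q.M v = some q ∧ I.rank v q < I.rank v u := by
  have hnotin : Q.M u ≠ some v := by
    intro h
    rcases hu with h' | ⟨p, hp, hlt⟩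
    · simp [h] at h'
    · obtain rfl : v = p := Option.some.inj (h ▸ hp)
      exact lt_irrefl _ hlt
  by_contra! hv
  refine hQ u v ⟨hadj, hnotin, hu, ?_⟩
  cases hq : Q.M v with
  | none => exact Or.inl rfl
  | some q =>
    have hqu : q ≠ u := fun h => hnotin (Q.symm v u (h ▸ hq))
    exact Or.inr ⟨q, rfl, I.rank_lt_of_le hadj.symm (Q.adj v q hq) hqu.symm (hv q hq)⟩

lemma Stable.rank_lt_or_rank_lt {N : I.Matching} (hN : I.Stable N) {v w p q : V}
    (hadj : I.G.Adj v w) (hp : N.M v = some p) (hq : N.M w = some q) (hpw : p ≠ w) :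
    I.rank v p < I.rank v w ∨ I.rank w q < I.rank w v := by
  by_cases hlt : I.rank v w < I.rank v p
  · obtain ⟨q', hq', hlt'⟩ := hN.exists_mate_of_prefers hadj (Or.inr ⟨p, hp, hlt⟩)
    obtain rfl : q = q' := Option.some.inj (hq ▸ hq')
    exact Or.inr hlt'
  · exact Or.inl (I.rank_lt_of_le (N.adj v p hp) hadj hpw (not_lt.mp hlt))

namespace Matching

def mate (N : I.Matching) (v : V) : V := (N.M v).getD v

lemma mate_eq_of_M_eq_some (N : I.Matching) {v w : V} (h : N.M v = some w) : N.mate v = w := by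
  simp [mate, h]

lemma mate_eq_self_of_M_eq_none (N : I.Matching) {v : V} (h : N.M v = none) : N.mate v = v := by
  simp [mate, h]

lemma mate_involutive (N : I.Matching) : Function.Involutive N.mate := by
  intro v
  cases hv : N.M v with
  | none => simp only [N.mate_eq_self_of_M_eq_none hv]
  | some w => rw [N.mate_eq_of_M_eq_some hv, N.mate_eq_of_M_eq_some (N.symm v w hv)]

def agentCost (N : I.Matching) (v : V) : ℕ := (N.M v).elim 0 (I.rank v)

lemma two_mul_cost_eq_sum_add_agentCost_comp (N : I.Matching) {ι : V → V}
    (hι : Function.Involutive ι) :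
    2 * I.cost N = ∑ v, (N.agentCost v + N.agentCost (ι v)) := by
  rw [Finset.sum_add_distrib, two_mul]
  exact congrArg (I.cost N + ·) (Equiv.sum_comp hι.toPerm N.agentCost).symm

end Matching

section AlternatingWalk

variable (M : Bool → I.Matching)

/-- The state `(v, b)` of the walk sits at `v`, about to follow the `M b`-edge. -/
def alternatingStep : Equiv.Perm (V × Bool) :=
  (Function.Involutive.toPerm (fun s : V × Bool => ((M s.2).mate s.1, s.2))
      fun s => by simp [(M s.2).mate_involutive s.1]).trans
    (Function.Involutive.toPerm (fun s : V × Bool => (s.1, !s.2)) fun s => by simp)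

lemma alternatingStep_apply (v : V) (b : Bool) :
    alternatingStep M (v, b) = ((M b).mate v, !b) := rfl

lemma alternatingStep_symm_apply (v : V) (b : Bool) :
    (alternatingStep M).symm (v, b) = ((M !b).mate v, !b) := by
  rw [Equiv.symm_apply_eq, alternatingStep_apply, (M !b).mate_involutive, Bool.not_not]

def WalkInvariant (s : V × Bool) : Prop :=
  ∃ w, (M s.2).M s.1 = some w ∧ I.Prefers (M !s.2) s.1 w

lemma walkInvariant_alternatingStep (hM : ∀ b, I.Stable (M b)) {s : V × Bool}
    (hs : WalkInvariant M s) : WalkInvariant M (alternatingStep M s) := by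
  obtain ⟨v, b⟩ := s
  obtain ⟨w, hw, hpref⟩ := hs
  obtain ⟨q, hq, hlt⟩ := (hM !b).exists_mate_of_prefers ((M b).adj v w hw) hpref
  rw [alternatingStep_apply, (M b).mate_eq_of_M_eq_some hw]
  exact ⟨q, hq, Or.inr ⟨v, by simpa using (M b).symm v w hw, hlt⟩⟩

end AlternatingWalk

theorem Stable.M_eq_none_of_M_eq_none {M₁ M₂ : I.Matching} (h₁ : I.Stable M₁)
    (h₂ : I.Stable M₂) {a : V} (ha : M₂.M a = none) : M₁.M a = none := by
  by_contra! hb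
  obtain ⟨b, hab⟩ := Option.ne_none_iff_exists'.mp hb
  let M : Bool → I.Matching := fun t => cond t M₁ M₂
  let σ := alternatingStep M
  have hM : ∀ t, I.Stable (M t) := Bool.rec h₂ h₁
  have hwalk : ∀ n, WalkInvariant M ((σ ^ n) (a, true)) := by
    intro n
    induction n with
    | zero => exact ⟨b, hab, Or.inl ha⟩
    | succ n ih =>
      rw [pow_succ', Equiv.Perm.mul_apply]
      exact walkInvariant_alternatingStep M hM ih
  have hperiod : σ ((σ ^ (orderOf σ - 1)) (a, true)) = (a, true) := by
    rw [← Equiv.Perm.mul_apply, ← pow_succ', Nat.sub_add_cancel (orderOf_pos σ),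
      pow_orderOf_eq_one, Equiv.Perm.one_apply]
  have hprev : (σ ^ (orderOf σ - 1)) (a, true) = (a, false) := by
    rw [← σ.symm_apply_eq.mpr hperiod.symm, alternatingStep_symm_apply]
    exact congrArg (·, false) (M₂.mate_eq_self_of_M_eq_none ha)
  obtain ⟨w, hw, -⟩ := hwalk (orderOf σ - 1)
  rw [hprev] at hw
  exact Option.some_ne_none w (hw.symm.trans ha)

lemma three_mul_agentCost_add_le (h4 : I.MaxDeg 4) {N Ne : I.Matching} (hN : I.Stable N)
    (hNe : I.Stable Ne) (v : V) :
    3 * (N.agentCost v + N.agentCost (Ne.mate v)) ≤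
      5 * (Ne.agentCost v + Ne.agentCost (Ne.mate v)) := by
  cases hv : Ne.M v with
  | none =>
    have hNv : N.M v = none := hN.M_eq_none_of_M_eq_none hNe hv
    simp [Matching.agentCost, Ne.mate_eq_self_of_M_eq_none hv, hv, hNv]
  | some w =>
    have hwv : Ne.M w = some v := Ne.symm v w hv
    have hadj : I.G.Adj v w := Ne.adj v w hv
    rw [Ne.mate_eq_of_M_eq_some hv]
    obtain ⟨p, hp⟩ : ∃ p, N.M v = some p := Option.ne_none_iff_exists'.mp
      fun h => by simp [hNe.M_eq_none_of_M_eq_none hN h] at hv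
    obtain ⟨q, hq⟩ : ∃ q, N.M w = some q := Option.ne_none_iff_exists'.mp
      fun h => by simp [hNe.M_eq_none_of_M_eq_none hN h] at hwv
    simp only [Matching.agentCost, hv, hwv, hp, hq, Option.elim_some]
    by_cases hpw : p = w
    · subst hpw
      obtain rfl : q = v := Option.some.inj (hq.symm.trans (N.symm v p hp))
      omega
    have := I.one_le_rank (N.adj v p hp)
    have := I.one_le_rank (N.adj w q hq)
    have := I.one_le_rank hadj
    have := I.one_le_rank hadj.symm
    have := I.rank_le_of_maxDeg h4 (N.adj v p hp)
    have := I.rank_le_of_maxDeg h4 (N.adj w q hq)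
    have := hN.rank_lt_or_rank_lt hadj hp hq hpw
    omega

end SRI

theorem stmt5_general (I : SRI V) (h4 : I.MaxDeg 4)
    (N Ne : I.Matching) (hN : I.Stable N) (hNe : I.Egalitarian Ne) :
    3 * I.cost N ≤ 5 * I.cost Ne := by
  have hsum := Finset.sum_le_sum fun v (_ : v ∈ Finset.univ) =>
    I.three_mul_agentCost_add_le h4 hN hNe.1 v
  rw [← Finset.mul_sum, ← Finset.mul_sum,
    ← N.two_mul_cost_eq_sum_add_agentCost_comp Ne.mate_involutive,
    ← Ne.two_mul_cost_eq_sum_add_agentCost_comp Ne.mate_involutive] at hsum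
  omega

/-- In a solvable 4-SRI instance without (1,1)- and (4,4)-pairs,
any stable matching satisfies `c(M) ≤ (5/3) c(M_egal)`. -/
theorem stmt5 (I : SRI V) (h4 : I.MaxDeg 4)
    (h11 : ∀ u v, I.G.Adj u v → ¬ (I.rank u v = 1 ∧ I.rank v u = 1))
    (h44 : ∀ u v, I.G.Adj u v → ¬ (I.rank u v = 4 ∧ I.rank v u = 4))
    (N Ne : I.Matching) (hN : I.Stable N) (hNe : I.Egalitarian Ne) :
    3 * I.cost N ≤ 5 * I.cost Ne :=
  stmt5_general I h4 N Ne hN hNe
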